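/- Let P be a poset of type A with at least two maximal elements, and let z be a maximal element of P having exactly one neighbor. Then both the down-cone D(z) and the peak-subposet P̄ = ⋃_{w ∈ max P, w ≠ z} D(w), each equipped with the induced order, are posets of type A; in particular, P̄ is connected. -/

import Mathlib

/-! ## Relation-based poset notions -/

/-- `x` and `y` are incomparable with respect to the relation `le`. -/
def RIncomp {α : Type*} (le : α → α → Prop) (x y : α) : Prop := ¬ le x y ∧ ¬ le y x

/-- The strict relation associated to `le`. -/
def RLt {α : Type*} (le : α → α → Prop) (x y : α) : Prop := le x y ∧ ¬ le y x

/-- `z` is a maximal element with respect to `le`. -/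
def RIsMax {α : Type*} (le : α → α → Prop) (z : α) : Prop := ∀ x, le z x → le x z

/-- `z` is a minimal element with respect to `le`. -/
def RIsMin {α : Type*} (le : α → α → Prop) (z : α) : Prop := ∀ x, le x z → le z x

/-- The down-cone `D(a) = {x | x ≤ a}`. -/
def RDown {α : Type*} (le : α → α → Prop) (a : α) : Set α := {x | le x a}

/-- The comparability graph of the relation `le`: vertices are the elements,
edges join comparable distinct elements. -/
def RCompGraph {α : Type*} (le : α → α → Prop) : SimpleGraph α where
  Adj x y := x ≠ y ∧ (le x y ∨ le y x)
  symm := ⟨fun x y h => ⟨Ne.symm h.1, h.2.symm⟩⟩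
  loopless := ⟨fun x h => h.1 rfl⟩

/-- Connectedness of the comparability graph. -/
def RConnected {α : Type*} (le : α → α → Prop) : Prop := (RCompGraph le).Connected

/-- `P` contains `R1` as a peak-subposet: a maximal element `z` together with three
distinct pairwise incomparable elements strictly below `z`. -/
def ContainsR1 {α : Type*} (le : α → α → Prop) : Prop :=
  ∃ z a b c : α, RIsMax le z ∧ a ≠ b ∧ a ≠ c ∧ b ≠ c ∧
    RIncomp le a b ∧ RIncomp le a c ∧ RIncomp le b c ∧
    RLt le a z ∧ RLt le b z ∧ RLt le c z

/-- `P` contains `R2` as a peak-subposet: distinct maximal `z ≠ z'` and elements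
`y < x` with `x < z` and `x < z'`. -/
def ContainsR2 {α : Type*} (le : α → α → Prop) : Prop :=
  ∃ z z' y x : α, RIsMax le z ∧ RIsMax le z' ∧ z ≠ z' ∧
    RLt le y x ∧ RLt le x z ∧ RLt le x z'

/-- `P` contains `R3` as a peak-subposet: three distinct maximal elements with a
common strict lower bound. -/
def ContainsR3 {α : Type*} (le : α → α → Prop) : Prop :=
  ∃ z₁ z₂ z₃ x : α, RIsMax le z₁ ∧ RIsMax le z₂ ∧ RIsMax le z₃ ∧
    z₁ ≠ z₂ ∧ z₁ ≠ z₃ ∧ z₂ ≠ z₃ ∧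
    RLt le x z₁ ∧ RLt le x z₂ ∧ RLt le x z₃

/-- `P` contains the crown `R_{4,n}` as a peak-subposet (with `m = n + 2` maximal
elements `z i` and `m` pairwise incomparable elements `x i`, indices mod `m`). -/
def ContainsCrown {α : Type*} (le : α → α → Prop) (n : ℕ) : Prop :=
  ∃ z x : Fin (n + 2) → α,
    Function.Injective z ∧ Function.Injective x ∧
    (∀ j, RIsMax le (z j)) ∧
    (∀ i j, x i ≠ z j) ∧
    (∀ i j, i ≠ j → RIncomp le (x i) (x j)) ∧
    (∀ i j, RLt le (x i) (z j) ↔ (j = i ∨ j = i - 1))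

/-- A poset (given by its order relation `le`) is of type `A`: it is connected and
contains none of `R1`, `R2`, `R3` and the crowns `R_{4,n}` as a peak-subposet. -/
def IsTypeA {α : Type*} (le : α → α → Prop) : Prop :=
  RConnected le ∧ ¬ ContainsR1 le ∧ ¬ ContainsR2 le ∧ ¬ ContainsR3 le ∧
    ∀ n : ℕ, ¬ ContainsCrown le n

/-- The set of neighbors of a maximal element `z`: maximal elements `z' ≠ z` whose
down-cone meets the down-cone of `z`. -/
def NeighborSet {α : Type*} (le : α → α → Prop) (z : α) : Set α :=
  {z' | RIsMax le z' ∧ z' ≠ z ∧ (RDown le z ∩ RDown le z').Nonempty}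

/-! ## Quivers of type `A_n` and alien sets -/

/-- A quiver of type `A_n`: vertices `Fin n`, and for each pair of consecutive
vertices exactly one arrow joining them (in one of the two orientations), and no
other arrows. -/
structure TypeAQuiver (n : ℕ) where
  arr : Fin n → Fin n → Prop
  adjacent : ∀ x y : Fin n, arr x y → (y.val = x.val + 1 ∨ x.val = y.val + 1)
  exactlyOne : ∀ x y : Fin n, y.val = x.val + 1 → (arr x y ↔ ¬ arr y x)

/-- `z` is a sink: no arrow starts at `z`. -/
def IsSinkQ {n : ℕ} (Q : TypeAQuiver n) (z : Fin n) : Prop := ∀ y, ¬ Q.arr z y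

/-- `z` is a source: no arrow ends at `z`. -/
def IsSourceQ {n : ℕ} (Q : TypeAQuiver n) (z : Fin n) : Prop := ∀ y, ¬ Q.arr y z

/-- `Supp I(z)`: the set of vertices admitting a directed path to `z` in `Q`. -/
def SuppI {n : ℕ} (Q : TypeAQuiver n) (z : Fin n) : Set (Fin n) :=
  {x | Relation.ReflTransGen Q.arr x z}

/-- The arrow relation of the quiver `Q^F` obtained from `Q` by adding the extra
arrows in `F` (an extra arrow is recorded as the pair (source, target)). -/
def QFarr {n : ℕ} (Q : TypeAQuiver n) (F : Set (Fin n × Fin n)) :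
    Fin n → Fin n → Prop :=
  fun x y => Q.arr x y ∨ (x, y) ∈ F

/-- `F` is an alien set for the type `A_n` quiver `Q`. -/
structure IsAlienSet {n : ℕ} (Q : TypeAQuiver n) (F : Set (Fin n × Fin n)) : Prop where
  /-- (a) Source and target of each extra arrow lie in `Supp I(z)` for some sink `z`. -/
  sameSupp : ∀ p ∈ F, ∃ z : Fin n, IsSinkQ Q z ∧ p.1 ∈ SuppI Q z ∧ p.2 ∈ SuppI Q z
  /-- (b) The target of an extra arrow is not a source of `Q`, unless it is extremal. -/
  targetNotSource : ∀ p ∈ F, IsSourceQ Q p.2 → (p.2.val = 0 ∨ p.2.val = n - 1)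
  /-- (c) Each extra arrow is the unique directed path in `Q^F` from its source to
  its target: every such path is the single arrow itself. -/
  uniquePath : ∀ p ∈ F, ∀ l : List (Fin n),
    List.Chain (QFarr Q F) p.1 (l ++ [p.2]) → l = []
  /-- (d) `Q^F` is acyclic. -/
  acyclic : ∀ x : Fin n, ¬ Relation.TransGen (QFarr Q F) x x

/-- The order relation of the poset `P_{Q^F}` associated to the acyclic quiver
`Q^F`: `x ≤ y` iff there is a (possibly trivial) directed path from `x` to `y`. -/
def leQF {n : ℕ} (Q : TypeAQuiver n) (F : Set (Fin n × Fin n)) :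
    Fin n → Fin n → Prop :=
  Relation.ReflTransGen (QFarr Q F)

/-! A peak-subposet inherits from `P` the absence of `R1`, `R2`, `R3` and the crowns, so only
connectedness needs an argument. `D(z)` is connected through its top `z`. For `P̄`, walk in `P`
between two points of `P̄`: a step leaving `P̄` goes from some `u ≤ w` (`w` maximal, `w ≠ z`) up
to an element lying only below `z`, so `w` is a neighbor of `z`, i.e. `w = z'` for the unique
neighbor `z'`; hence every exit point of `P̄` can be rerouted inside `P̄` through `z'`. -/

open SimpleGraph

section PeakEmbedding

variable {α β : Type*} {r : α → α → Prop} {s : β → β → Prop} {f : α → β}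

structure IsPeakEmbedding (r : α → α → Prop) (s : β → β → Prop) (f : α → β) : Prop where
  injective : Function.Injective f
  rel_iff : ∀ a b, s (f a) (f b) ↔ r a b
  rIsMax : ∀ a, RIsMax r a → RIsMax s (f a)

namespace IsPeakEmbedding

variable (hf : IsPeakEmbedding r s f)
include hf

theorem rIncomp_iff {a b : α} : RIncomp s (f a) (f b) ↔ RIncomp r a b := by
  simp only [RIncomp, hf.rel_iff]

theorem rLt_iff {a b : α} : RLt s (f a) (f b) ↔ RLt r a b := by
  simp only [RLt, hf.rel_iff]

theorem containsR1 : ContainsR1 r → ContainsR1 s := by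
  rintro ⟨z, a, b, c, hz, hab, hac, hbc, iab, iac, ibc, ha, hb, hc⟩
  exact ⟨f z, f a, f b, f c, hf.rIsMax z hz, hf.injective.ne hab, hf.injective.ne hac,
    hf.injective.ne hbc, hf.rIncomp_iff.2 iab, hf.rIncomp_iff.2 iac, hf.rIncomp_iff.2 ibc,
    hf.rLt_iff.2 ha, hf.rLt_iff.2 hb, hf.rLt_iff.2 hc⟩

theorem containsR2 : ContainsR2 r → ContainsR2 s := by
  rintro ⟨z, z', y, x, hz, hz', hne, hyx, hxz, hxz'⟩
  exact ⟨f z, f z', f y, f x, hf.rIsMax z hz, hf.rIsMax z' hz', hf.injective.ne hne,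
    hf.rLt_iff.2 hyx, hf.rLt_iff.2 hxz, hf.rLt_iff.2 hxz'⟩

theorem containsR3 : ContainsR3 r → ContainsR3 s := by
  rintro ⟨z₁, z₂, z₃, x, h₁, h₂, h₃, h₁₂, h₁₃, h₂₃, hx₁, hx₂, hx₃⟩
  exact ⟨f z₁, f z₂, f z₃, f x, hf.rIsMax z₁ h₁, hf.rIsMax z₂ h₂, hf.rIsMax z₃ h₃,
    hf.injective.ne h₁₂, hf.injective.ne h₁₃, hf.injective.ne h₂₃,
    hf.rLt_iff.2 hx₁, hf.rLt_iff.2 hx₂, hf.rLt_iff.2 hx₃⟩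

theorem containsCrown {n : ℕ} : ContainsCrown r n → ContainsCrown s n := by
  rintro ⟨z, x, hz, hx, hzmax, hxz, hinc, hlt⟩
  exact ⟨f ∘ z, f ∘ x, hf.injective.comp hz, hf.injective.comp hx,
    fun j => hf.rIsMax _ (hzmax j), fun i j h => hxz i j (hf.injective h),
    fun i j hij => hf.rIncomp_iff.2 (hinc i j hij), fun i j => hf.rLt_iff.trans (hlt i j)⟩

theorem isTypeA (hs : IsTypeA s) (hr : RConnected r) : IsTypeA r :=
  ⟨hr, mt hf.containsR1 hs.2.1, mt hf.containsR2 hs.2.2.1, mt hf.containsR3 hs.2.2.2.1,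
    fun n => mt hf.containsCrown (hs.2.2.2.2 n)⟩

end IsPeakEmbedding

theorem isPeakEmbedding_subtypeVal {p : β → Prop}
    (hmax : ∀ w : Subtype p, RIsMax (fun a b : Subtype p => s a b) w → RIsMax s (w : β)) :
    IsPeakEmbedding (fun a b : Subtype p => s a b) s Subtype.val :=
  ⟨Subtype.val_injective, fun _ _ => Iff.rfl, hmax⟩

end PeakEmbedding

section Comparability

variable {α : Type*} {r : α → α → Prop}

theorem RCompGraph.reachable_of_rel {a b : α} (h : r a b) : (RCompGraph r).Reachable a b := by
  rcases eq_or_ne a b with rfl | hne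
  · rfl
  · exact Adj.reachable ⟨hne, Or.inl h⟩

theorem rConnected_of_forall_rel {t : α} (ht : ∀ a, r a t) : RConnected r :=
  have : Nonempty α := ⟨t⟩
  ⟨fun a b => (RCompGraph.reachable_of_rel (ht a)).trans (RCompGraph.reachable_of_rel (ht b)).symm⟩

theorem RCompGraph.subtype_eq_comap {p : α → Prop} :
    RCompGraph (fun a b : Subtype p => r a b) = (RCompGraph r).comap Subtype.val := by
  ext a b
  simp [RCompGraph, Subtype.ext_iff]

end Comparability

theorem SimpleGraph.Connected.comap_subtypeVal {V : Type*} {G : SimpleGraph V} (hG : G.Connected)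
    {p : V → Prop} (c : Subtype p)
    (hexit : ∀ (u : Subtype p) (v : V), ¬ p v → G.Adj u v → (G.comap Subtype.val).Reachable u c) :
    (G.comap (Subtype.val : Subtype p → V)).Connected := by
  have toC : ∀ {x y : V} (w : G.Walk x y) (hx : p x), y = c →
      (G.comap Subtype.val).Reachable ⟨x, hx⟩ c := by
    intro x y w
    induction w with
    | nil =>
      intro hx hy
      obtain rfl : (⟨_, hx⟩ : Subtype p) = c := Subtype.ext hy
      rfl
    | @cons u v _ huv _ ih =>
      intro hu hy
      by_cases hv : p v
      · have hstep : (G.comap Subtype.val).Adj (⟨u, hu⟩ : Subtype p) ⟨v, hv⟩ := huv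
        exact hstep.reachable.trans (ih hv hy)
      · exact hexit ⟨u, hu⟩ v hv huv
  have : Nonempty (Subtype p) := ⟨c⟩
  exact ⟨fun a b => (toC (hG.preconnected a c).some a.2 rfl).trans
    (toC (hG.preconnected b c).some b.2 rfl).symm⟩

section FinitePoset

variable {P : Type*} [PartialOrder P]

theorem exists_rIsMax_ge [Finite P] (x : P) : ∃ m, RIsMax (· ≤ ·) m ∧ x ≤ m := by
  obtain ⟨m, hxm, hm⟩ := Finite.exists_le_maximal (p := fun _ : P => True) trivial (a := x)
  exact ⟨m, fun y h => hm.2 trivial h, hxm⟩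

theorem rIsMax_of_rIsMax_downcone {z : P} (hz : RIsMax (· ≤ ·) z) (w : {x : P // x ≤ z})
    (hw : RIsMax (fun a b : {x : P // x ≤ z} => (a : P) ≤ b) w) : RIsMax (· ≤ ·) (w : P) := by
  rwa [le_antisymm w.2 (hw ⟨z, le_rfl⟩ w.2)]

theorem rIsMax_of_rIsMax_peakUnion {q : P → Prop}
    (w : {x : P // ∃ m, RIsMax (· ≤ ·) m ∧ q m ∧ x ≤ m})
    (hw : RIsMax (fun a b : {x : P // ∃ m, RIsMax (· ≤ ·) m ∧ q m ∧ x ≤ m} => (a : P) ≤ b) w) :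
    RIsMax (· ≤ ·) (w : P) := by
  obtain ⟨m, hm, hqm, hwm⟩ := w.2
  rwa [le_antisymm hwm (hw ⟨m, m, hm, hqm, le_rfl⟩ hwm)]

variable [Finite P] {z z₀ : P} (huniq : ∀ w ∈ NeighborSet (· ≤ ·) z, w = z₀)
include huniq

theorem le_uniqueNeighbor_of_exit {u v : P}
    (hu : ∃ w, RIsMax (· ≤ ·) w ∧ w ≠ z ∧ u ≤ w) (hv : ¬ ∃ w, RIsMax (· ≤ ·) w ∧ w ≠ z ∧ v ≤ w)
    (huv : u ≤ v ∨ v ≤ u) : u ≤ z₀ := by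
  obtain ⟨w, hw, hwz, huw⟩ := hu
  have hle : u ≤ v := huv.resolve_right fun hvu => hv ⟨w, hw, hwz, hvu.trans huw⟩
  have hvz : v ≤ z := by
    obtain ⟨m, hm, hvm⟩ := exists_rIsMax_ge v
    obtain rfl : m = z := by_contra fun hmz => hv ⟨m, hm, hmz, hvm⟩
    exact hvm
  obtain rfl := huniq w ⟨hw, hwz, u, hle.trans hvz, huw⟩
  exact huw

theorem rConnected_peakUnion_of_uniqueNeighbor (hconn : RConnected (α := P) (· ≤ ·))
    (hz₀ : z₀ ∈ NeighborSet (· ≤ ·) z) :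
    RConnected (fun a b : {x : P // ∃ w, RIsMax (· ≤ ·) w ∧ w ≠ z ∧ x ≤ w} => (a : P) ≤ b) := by
  let c : {x : P // ∃ w, RIsMax (· ≤ ·) w ∧ w ≠ z ∧ x ≤ w} := ⟨z₀, z₀, hz₀.1, hz₀.2.1, le_rfl⟩
  rw [RConnected, RCompGraph.subtype_eq_comap]
  refine hconn.comap_subtypeVal c fun u v hv huv => ?_
  rw [← RCompGraph.subtype_eq_comap]
  exact RCompGraph.reachable_of_rel (le_uniqueNeighbor_of_exit huniq u.2 hv huv.2)

end FinitePoset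

theorem downcone_and_complement_are_typeA_general {P : Type*} [Fintype P] [PartialOrder P]
    (hA : IsTypeA (fun x y : P => x ≤ y))
    (z : P) (hz : RIsMax (fun x y : P => x ≤ y) z)
    (hone : ∃! z' : P, z' ∈ NeighborSet (fun x y : P => x ≤ y) z) :
    IsTypeA (fun a b : {x : P // x ≤ z} => (a : P) ≤ (b : P)) ∧
    IsTypeA (fun a b : {x : P // ∃ w : P, RIsMax (fun u v : P => u ≤ v) w ∧ w ≠ z ∧ x ≤ w} =>
      (a : P) ≤ (b : P)) := by
  obtain ⟨z₀, hz₀, huniq⟩ := hone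
  refine ⟨?_, ?_⟩
  · exact (isPeakEmbedding_subtypeVal (rIsMax_of_rIsMax_downcone hz)).isTypeA hA
      (rConnected_of_forall_rel (t := ⟨z, le_rfl⟩) Subtype.prop)
  · exact (isPeakEmbedding_subtypeVal rIsMax_of_rIsMax_peakUnion).isTypeA hA
      (rConnected_peakUnion_of_uniqueNeighbor huniq hA.1 hz₀)

/-- Let `P` be a poset of type `A` with at least two maximal
elements and let `z` be a maximal element having exactly one neighbor. Then both
the down-cone `D(z)` and the peak-subposet `P̄ = ⋃_{w maximal, w ≠ z} D(w)`, with
the induced orders, are posets of type `A` (in particular `P̄` is connected). -/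
theorem downcone_and_complement_are_typeA {P : Type*} [Fintype P] [PartialOrder P]
    (hA : IsTypeA (fun x y : P => x ≤ y))
    (htwo : ∃ z w : P, RIsMax (fun x y : P => x ≤ y) z ∧
      RIsMax (fun x y : P => x ≤ y) w ∧ z ≠ w)
    (z : P) (hz : RIsMax (fun x y : P => x ≤ y) z)
    (hone : ∃! z' : P, z' ∈ NeighborSet (fun x y : P => x ≤ y) z) :
    IsTypeA (fun a b : {x : P // x ≤ z} => (a : P) ≤ (b : P)) ∧
    IsTypeA (fun a b : {x : P // ∃ w : P, RIsMax (fun u v : P => u ≤ v) w ∧ w ≠ z ∧ x ≤ w} =>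
      (a : P) ≤ (b : P)) :=
  downcone_and_complement_are_typeA_general hA z hz hone
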